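/- Let P(x) be a nonconstant polynomial with integer coefficients. Then the set of prime numbers p such that p divides P(n) for some integer n is infinite. -/
import Mathlib

theorem schur_infinite_prime_divisors (P : Polynomial ℤ) (hP : 1 ≤ P.natDegree) :
    {p : ℕ | p.Prime ∧ ∃ n : ℤ, (p : ℤ) ∣ P.eval n}.Infinite := by
  set a : ℤ := P.eval 0 with ha
  by_cases ha0 : a = 0
  · exact Nat.infinite_setOf_prime.mono
      (fun p hp => ⟨hp, 0, by simp [← ha, ha0]⟩)
  intro hfin
  set T := hfin.toFinset with hT
  set M : ℤ := ∏ p ∈ T, (p : ℤ) with hM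
  have hMpos : 0 < M := Finset.prod_pos (fun p hp => by
    exact_mod_cast ((hfin.mem_toFinset.mp hp).1.pos))
  have haM : a * M ≠ 0 := mul_ne_zero ha0 hMpos.ne'
  -- the set of x with |P x| ≤ |a| is finite
  have hfin2 : {x : ℤ | |P.eval x| ≤ |a|}.Finite := by
    have hsub : {x : ℤ | |P.eval x| ≤ |a|} ⊆
        ⋃ v ∈ Set.Icc (-|a|) |a|, {x : ℤ | P.eval x = v} := by
      intro x hx
      simp only [Set.mem_iUnion, Set.mem_setOf_eq, Set.mem_Icc]
      exact ⟨P.eval x, abs_le.mp hx, rfl⟩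
    refine Set.Finite.subset (Set.Finite.biUnion (Set.finite_Icc _ _) ?_) hsub
    intro v _
    have hne : P - Polynomial.C v ≠ 0 := by
      intro h
      rw [sub_eq_zero.mp h] at hP
      simp [Polynomial.natDegree_C] at hP
    have := Polynomial.finite_setOf_isRoot hne
    refine this.subset ?_
    intro x hx
    simp only [Set.mem_setOf_eq] at hx
    simp [Polynomial.IsRoot, hx]
  -- find t with |P (a*M*t)| > |a|
  have hinf : (Set.range fun t : ℤ => a * M * t).Infinite :=
    Set.infinite_range_of_injective (fun s t h => by
      exact mul_left_cancel₀ haM h)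
  obtain ⟨x, hx1, hx2⟩ := (hinf.diff hfin2).nonempty
  obtain ⟨t, rfl⟩ := hx1
  simp only [Set.mem_setOf_eq, not_le] at hx2
  set n : ℤ := a * M * t with hn
  have hdvd : a * M ∣ P.eval n - a := by
    have := Polynomial.sub_dvd_eval_sub n 0 P
    simpa [ha, hn, mul_assoc] using (dvd_trans ⟨t, by ring⟩ this)
  obtain ⟨s, hs⟩ := hdvd
  have hPn : P.eval n = a * (1 + M * s) := by linarith [hs]
  have h1 : 1 < |1 + M * s| := by
    have : |a| * |1 + M * s| = |P.eval n| := by rw [hPn, abs_mul]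
    nlinarith [abs_pos.mpr ha0, abs_nonneg (1 + M * s)]
  obtain ⟨q, hq, hqdvd⟩ := Int.exists_prime_and_dvd (n := 1 + M * s) (by
    intro h
    rw [Int.abs_eq_natAbs, h] at h1
    norm_num at h1)
  have hqnat : q.natAbs.Prime := Int.prime_iff_natAbs_prime.mp hq
  have hqd : (q.natAbs : ℤ) ∣ 1 + M * s := (Int.natAbs_dvd).mpr hqdvd
  have hmem : q.natAbs ∈ T := by
    rw [hfin.mem_toFinset]
    exact ⟨hqnat, n, hqd.trans ⟨a, by rw [hPn]; ring⟩⟩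
  have hdM : (q.natAbs : ℤ) ∣ M :=
    Finset.dvd_prod_of_mem (fun p : ℕ => (p : ℤ)) hmem
  have : (q.natAbs : ℤ) ∣ 1 := by
    have := hqd.sub (hdM.mul_right s)
    simpa using this
  have h3 : (q.natAbs : ℤ) ≤ 1 := Int.le_of_dvd one_pos this
  have h2 : 2 ≤ q.natAbs := hqnat.two_le
  omega
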